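/- arXiv:2210.06880 — 8 statements merged into one kernel-verified Lean document; each statement's English description precedes it below -/
import Mathlib

section
/- Let α be a finite type and σ a permutation of α. Then there exists an involution γ (i.e. γ ∘ γ = id) such that γ ∘ σ ∘ γ = σ⁻¹. -/
open Equiv

private theorem aux_cycle {α : Type*} [Fintype α] [DecidableEq α] (σ : Equiv.Perm α)
    (hσ : σ.IsCycle) :
    ∃ γ : Equiv.Perm α, γ * γ = 1 ∧ γ * σ * γ = σ⁻¹ ∧ γ.support ⊆ σ.support := by
  classical
  set a : α := Classical.choose hσ with ha
  have haspec := Classical.choose_spec hσ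
  have hamem : a ∈ σ.support := Equiv.Perm.mem_support.2 haspec.1
  -- every point of the support is (σ^k) a for some k : ℤ
  have hexists : ∀ x ∈ σ.support, ∃ k : ℤ, (σ ^ k) a = x := by
    intro x hx
    exact haspec.2 (Equiv.Perm.mem_support.1 hx)
  have hmem : ∀ k : ℤ, (σ ^ k) a ∈ σ.support := by
    intro k
    rw [Equiv.Perm.zpow_apply_mem_support]
    exact hamem
  -- the reversal function
  let f : α → α := fun x =>
    if hx : x ∈ σ.support then (σ ^ (-(Classical.choose (hexists x hx)))) a else x
  have zpadd : ∀ m n : ℤ, (σ ^ m) ((σ ^ n) a) = (σ ^ (m + n)) a := by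
    intro m n
    rw [← Equiv.Perm.mul_apply, ← zpow_add]
  have hf_spec : ∀ (k : ℤ), f ((σ ^ k) a) = (σ ^ (-k)) a := by
    intro k
    have hm := hmem k
    have hc := Classical.choose_spec (hexists _ hm)
    set j : ℤ := Classical.choose (hexists _ hm) with hj
    have hfx : f ((σ ^ k) a) = (σ ^ (-j)) a := by simp only [f, dif_pos hm]; rfl
    rw [hfx]
    have h1 : (σ ^ (j - k)) a = a := by
      calc (σ ^ (j - k)) a = (σ ^ (-k + j)) a := by rw [sub_eq_neg_add]
        _ = (σ ^ (-k)) ((σ ^ j) a) := (zpadd _ _).symm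
        _ = (σ ^ (-k)) ((σ ^ k) a) := by rw [hc]
        _ = (σ ^ (-k + k)) a := zpadd _ _
        _ = a := by rw [neg_add_cancel, zpow_zero, Equiv.Perm.one_apply]
    calc (σ ^ (-j)) a = (σ ^ (-j)) ((σ ^ (j - k)) a) := by rw [h1]
      _ = (σ ^ (-j + (j - k))) a := zpadd _ _
      _ = (σ ^ (-k)) a := by ring_nf
  have hf_fix : ∀ x ∉ σ.support, f x = x := fun x hx => dif_neg hx
  have hf_invol : Function.Involutive f := by
    intro x
    by_cases hx : x ∈ σ.support
    · obtain ⟨k, rfl⟩ := hexists x hx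
      rw [hf_spec, hf_spec, neg_neg]
    · rw [hf_fix x hx, hf_fix x hx]
  refine ⟨hf_invol.toPerm f, ?_, ?_, ?_⟩
  · ext x
    simp [hf_invol x]
  · ext x
    simp only [Equiv.Perm.mul_apply, Function.Involutive.coe_toPerm]
    by_cases hx : x ∈ σ.support
    · obtain ⟨k, rfl⟩ := hexists x hx
      rw [hf_spec]
      have hstep : σ ((σ ^ (-k)) a) = (σ ^ (1 + -k)) a := by
        rw [← zpadd 1 (-k), zpow_one]
      rw [hstep, hf_spec]
      have hinv : σ⁻¹ ((σ ^ k) a) = (σ ^ (-1 + k)) a := by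
        rw [← zpadd (-1) k, zpow_neg_one]
      rw [hinv]
      ring_nf
    · have h1 : σ x = x := Equiv.Perm.notMem_support.1 hx
      have h2 : σ⁻¹ x = x := σ.injective (by rw [← Equiv.Perm.mul_apply, mul_inv_cancel, Equiv.Perm.one_apply, h1])
      rw [hf_fix x hx, h1, hf_fix x hx, h2]
  · intro x hx
    rw [Equiv.Perm.mem_support] at hx ⊢
    simp only [Function.Involutive.coe_toPerm] at hx
    intro h
    exact hx (by rw [hf_fix x (Equiv.Perm.notMem_support.2 h)])

private theorem aux_main {α : Type*} [Fintype α] [DecidableEq α] (σ : Equiv.Perm α) :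
    ∃ γ : Equiv.Perm α, γ * γ = 1 ∧ γ * σ * γ = σ⁻¹ ∧ γ.support ⊆ σ.support := by
  induction σ using Equiv.Perm.cycle_induction_on with
  | base_one => exact ⟨1, by simp⟩
  | base_cycles σ hσ => exact aux_cycle σ hσ
  | induction_disjoint σ τ hd hc ihσ ihτ =>
    obtain ⟨γ₁, hγ₁sq, hγ₁conj, hγ₁supp⟩ := ihσ
    obtain ⟨γ₂, hγ₂sq, hγ₂conj, hγ₂supp⟩ := ihτ
    have hd12 : γ₁.Disjoint γ₂ := by
      rw [Equiv.Perm.disjoint_iff_disjoint_support]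
      exact Finset.disjoint_of_subset_left hγ₁supp
        (Finset.disjoint_of_subset_right hγ₂supp
          (Equiv.Perm.disjoint_iff_disjoint_support.1 hd))
    have hd1τ : γ₁.Disjoint τ := by
      rw [Equiv.Perm.disjoint_iff_disjoint_support]
      exact Finset.disjoint_of_subset_left hγ₁supp
        (Equiv.Perm.disjoint_iff_disjoint_support.1 hd)
    have hd2σ : γ₂.Disjoint σ := by
      rw [Equiv.Perm.disjoint_iff_disjoint_support]
      exact Finset.disjoint_of_subset_left hγ₂supp
        (Equiv.Perm.disjoint_iff_disjoint_support.1 hd).symm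
    have c12 := hd12.commute
    have c1τ := hd1τ.commute
    have c2σ := hd2σ.commute
    have cστ := hd.commute
    refine ⟨γ₁ * γ₂, ?_, ?_, ?_⟩
    · calc γ₁ * γ₂ * (γ₁ * γ₂) = γ₁ * γ₁ * (γ₂ * γ₂) := by
            rw [mul_assoc, ← mul_assoc γ₂, c12.eq.symm, mul_assoc, ← mul_assoc]
      _ = 1 := by rw [hγ₁sq, hγ₂sq, one_mul]
    · have : γ₁ * γ₂ * (σ * τ) * (γ₁ * γ₂) = (γ₁ * σ * γ₁) * (γ₂ * τ * γ₂) := by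
        have e1 : γ₂ * σ = σ * γ₂ := c2σ.eq
        have e2 : τ * γ₁ = γ₁ * τ := c1τ.symm.eq
        have e3 : γ₂ * γ₁ = γ₁ * γ₂ := c12.symm.eq
        calc γ₁ * γ₂ * (σ * τ) * (γ₁ * γ₂)
            = γ₁ * (γ₂ * σ) * (τ * γ₁) * γ₂ := by group
          _ = γ₁ * (σ * γ₂) * (γ₁ * τ) * γ₂ := by rw [e1, e2]
          _ = γ₁ * σ * (γ₂ * γ₁) * (τ * γ₂) := by group
          _ = γ₁ * σ * (γ₁ * γ₂) * (τ * γ₂) := by rw [e3]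
          _ = (γ₁ * σ * γ₁) * (γ₂ * τ * γ₂) := by group
      rw [this, hγ₁conj, hγ₂conj, mul_inv_rev, (cστ.inv_inv).eq]
    · calc (γ₁ * γ₂).support ⊆ γ₁.support ∪ γ₂.support := Equiv.Perm.support_mul_le _ _
        _ ⊆ σ.support ∪ τ.support := Finset.union_subset_union hγ₁supp hγ₂supp
        _ = (σ * τ).support := (hd.support_mul).symm

theorem stmt_0 {α : Type*} [Fintype α] [DecidableEq α] (σ : Equiv.Perm α) :
    ∃ γ : Equiv.Perm α, γ * γ = 1 ∧ γ * σ * γ = σ⁻¹ := by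
  obtain ⟨γ, h1, h2, _⟩ := aux_main σ
  exact ⟨γ, h1, h2⟩
end

section
/- Let σ be a permutation of a finite type that is a cycle of odd length n on its support, and let γ be an involution with γ ∘ σ ∘ γ = σ⁻¹ such that γ maps the support of σ into itself. Then there is exactly one element x in the support of σ with γ x = x. -/
open Equiv

theorem stmt_3 {α : Type*} [Fintype α] [DecidableEq α] (σ γ : Equiv.Perm α) (n : ℕ)
    (hcyc : σ.IsCycle) (hcard : σ.support.card = n) (hodd : Odd n)
    (hinv : γ * γ = 1) (hconj : γ * σ * γ = σ⁻¹)
    (hsupp : ∀ x ∈ σ.support, γ x ∈ σ.support) :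
    ∃! x : α, x ∈ σ.support ∧ γ x = x := by
  have hginv : γ⁻¹ = γ := inv_eq_of_mul_eq_one_right hinv
  have hconj' : γ * σ * γ⁻¹ = σ⁻¹ := by rw [hginv]; exact hconj
  have key : ∀ (i : ℤ) (x : α), γ ((σ ^ i) x) = (σ ^ (-i)) (γ x) := by
    intro i x
    have h1 : γ * σ ^ i * γ⁻¹ = σ ^ (-i) := by
      rw [← conj_zpow, hconj', zpow_neg, inv_zpow]
    have h2 : γ * σ ^ i = σ ^ (-i) * γ := by
      rw [← h1, mul_assoc, hginv, mul_assoc, hinv, mul_one]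
    calc γ ((σ ^ i) x) = (γ * σ ^ i) x := rfl
    _ = (σ ^ (-i) * γ) x := by rw [h2]
    _ = (σ ^ (-i)) (γ x) := rfl
  have hsplit : ∀ (a b : ℤ) (z : α), (σ ^ (a + b)) z = (σ ^ a) ((σ ^ b) z) := by
    intro a b z; rw [zpow_add, Equiv.Perm.mul_apply]
  have hC : σ.IsCycleOn (σ.support : Set α) := by
    rw [Equiv.Perm.coe_support_eq_set_support]; exact hcyc.isCycleOn
  obtain ⟨x, hx, hx'⟩ := hcyc
  have hxs : x ∈ σ.support := Equiv.Perm.mem_support.2 hx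
  have hγx : γ x ∈ σ.support := hsupp x hxs
  obtain ⟨k, hk⟩ : σ.SameCycle x (γ x) := hx' (Equiv.Perm.mem_support.1 hγx)
  have hzpow : ∀ {i : ℤ}, (σ ^ i) x = x ↔ (n : ℤ) ∣ i := by
    intro i; rw [← hcard]; exact hC.zpow_apply_eq hxs
  obtain ⟨t, ht⟩ := hodd
  set m : ℤ := k * (t + 1) with hm
  have h2m : (n : ℤ) ∣ 2 * m - k := by
    have : 2 * m - k = k * (n : ℤ) := by push_cast [ht]; ring
    rw [this]; exact Dvd.intro_left k rfl
  refine ⟨(σ ^ m) x, ⟨?_, ?_⟩, ?_⟩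
  · exact Equiv.Perm.zpow_apply_mem_support.2 hxs
  · rw [key m x, ← hk, ← hsplit]
    have hd : (n : ℤ) ∣ (-m + k) - m := by
      have : -m + k - m = -(2 * m - k) := by ring
      rw [this]; exact h2m.neg_right
    have h0 : (σ ^ (-m + k - m)) x = x := hzpow.2 hd
    calc (σ ^ (-m + k)) x = (σ ^ m) ((σ ^ (-m + k - m)) x) := by
          rw [← hsplit]; congr 2; ring
    _ = (σ ^ m) x := by rw [h0]
  · rintro y ⟨hys, hγy⟩
    obtain ⟨j, hj⟩ : σ.SameCycle x y := hx' (Equiv.Perm.mem_support.1 hys)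
    have h1 : (σ ^ (-j)) ((σ ^ k) x) = (σ ^ j) x := by
      rw [hk, ← key j x, hj]; exact hγy
    have h2 : (σ ^ (k - 2 * j)) x = x := by
      calc (σ ^ (k - 2 * j)) x = (σ ^ (-j)) ((σ ^ (-j)) ((σ ^ k) x)) := by
            rw [← hsplit, ← hsplit]; congr 2; ring
      _ = (σ ^ (-j)) ((σ ^ j) x) := by rw [h1]
      _ = (σ ^ (-j + j)) x := (hsplit _ _ _).symm
      _ = x := by simp
    have hdvd : (n : ℤ) ∣ k - 2 * j := hzpow.1 h2
    have hdvd2 : (n : ℤ) ∣ 2 * (m - j) := by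
      have := dvd_add h2m hdvd
      rwa [show 2 * m - k + (k - 2 * j) = 2 * (m - j) by ring] at this
    have hcop : IsCoprime (n : ℤ) 2 := by
      rw [Int.isCoprime_iff_gcd_eq_one]
      have hodd' : Odd n := ⟨t, ht⟩
      simpa [Int.gcd] using hodd'.coprime_two_right
    have hdvd3 : (n : ℤ) ∣ m - j := hcop.dvd_of_dvd_mul_left hdvd2
    have h3 : (σ ^ (m - j)) x = x := hzpow.2 hdvd3
    rw [← hj]
    calc (σ ^ j) x = (σ ^ j) ((σ ^ (m - j)) x) := by rw [h3]
    _ = (σ ^ (j + (m - j))) x := (hsplit _ _ _).symm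
    _ = (σ ^ m) x := by congr 2; ring
end

section
/- Let σ be a permutation of a finite type that is a cycle of even length n on its support, and let γ be an involution with γ ∘ σ ∘ γ = σ⁻¹ such that γ maps the support of σ into itself. Then the number of fixed points of γ in the support of σ is either 0 or 2; moreover if x and y are two distinct fixed points of γ in the support of σ, then y = σ^(n/2) x. -/
open Equiv

theorem stmt_4 {α : Type*} [Fintype α] [DecidableEq α] (σ γ : Equiv.Perm α) (n : ℕ)
    (hcyc : σ.IsCycle) (hcard : σ.support.card = n) (heven : Even n)
    (hinv : γ * γ = 1) (hconj : γ * σ * γ = σ⁻¹)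
    (hsupp : ∀ x ∈ σ.support, γ x ∈ σ.support) :
    ((σ.support.filter (fun x => γ x = x)).card = 0 ∨
      (σ.support.filter (fun x => γ x = x)).card = 2) ∧
    ∀ x ∈ σ.support, ∀ y ∈ σ.support, γ x = x → γ y = y → x ≠ y →
      y = (σ ^ (n / 2)) x := by
  obtain ⟨m, hm⟩ := heven
  have hn2 : 2 ≤ n := hcard ▸ hcyc.two_le_card_support
  have hhalf : n / 2 = m := by omega
  have hγinv : γ⁻¹ = γ := by
    rw [← mul_one γ⁻¹, ← hinv, ← mul_assoc, inv_mul_cancel, one_mul]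
  have horder : orderOf σ = n := by rw [hcyc.orderOf, hcard]
  have hpow : σ ^ n = 1 := by rw [← horder]; exact pow_orderOf_eq_one σ
  have hdvd : ∀ x : α, σ x ≠ x → ∀ k : ℕ, (σ ^ k) x = x → n ∣ k := by
    intro x hx k hk
    rw [← horder]
    exact orderOf_dvd_of_pow_eq_one (hcyc.pow_eq_one_iff.mpr ⟨x, hx, hk⟩)
  have hmul : ∀ k : ℕ, γ * σ ^ k = σ⁻¹ ^ k * γ := by
    intro k
    induction k with
    | zero => simp
    | succ k ih =>
      have h1 : γ * σ = σ⁻¹ * γ := by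
        calc γ * σ = (γ * σ * γ) * γ := by rw [mul_assoc, hinv, mul_one]
        _ = σ⁻¹ * γ := by rw [hconj]
      rw [pow_succ, ← mul_assoc, ih, mul_assoc, h1, ← mul_assoc, ← pow_succ]
  have hgs : ∀ (k : ℕ) (x : α), γ ((σ ^ k) x) = (σ⁻¹ ^ k) (γ x) := by
    intro k x
    have := congrFun (congrArg (fun p => (p : Perm α) ∘ (id : α → α)) (hmul k)) x
    simpa [Perm.mul_apply] using this
  have hinvpow : σ⁻¹ ^ m = σ ^ m := by
    have h2 : σ ^ m * σ ^ m = 1 := by rw [← pow_add, ← hm, hpow]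
    rw [inv_pow, inv_eq_of_mul_eq_one_right h2]
  -- key lemma
  have key : ∀ x ∈ σ.support, ∀ y ∈ σ.support, γ x = x → γ y = y → x ≠ y →
      y = (σ ^ (n / 2)) x := by
    intro x hx y hy hgx hgy hxy
    obtain ⟨i, hi⟩ := hcyc.exists_pow_eq (Perm.mem_support.mp hx)
      (Perm.mem_support.mp hy)
    set k := i % n with hk
    have hik : σ ^ i = σ ^ k := by
      conv_lhs => rw [← Nat.div_add_mod i n]
      rw [pow_add, pow_mul, hpow, one_pow, one_mul]
    have hky : (σ ^ k) x = y := by rw [← hik]; exact hi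
    have hky' : (σ⁻¹ ^ k) x = y := by
      rw [← hgx, ← hgs, hky, hgy]
    have h2k : (σ ^ (2 * k)) x = x := by
      have hkyx : (σ ^ k) y = x := by
        rw [← hky', inv_pow, ← Perm.mul_apply, mul_inv_cancel, Perm.one_apply]
      rw [two_mul, pow_add, Perm.mul_apply, hky, hkyx]
    have hdvd2k : n ∣ 2 * k := hdvd x (Perm.mem_support.mp hx) _ h2k
    have hklt : k < n := Nat.mod_lt _ (by omega)
    have hkne : k ≠ 0 := by
      intro h0
      apply hxy
      rw [← hky, h0, pow_zero, Perm.one_apply]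
    have hkm : k = m := by
      obtain ⟨c, hc⟩ := hdvd2k
      have hcub : n * c < n * 2 := by rw [← hc]; omega
      have hclt : c < 2 := Nat.lt_of_mul_lt_mul_left hcub
      interval_cases c <;> omega
    rw [← hky, hkm, hhalf]
  refine ⟨?_, fun x hx y hy hgx hgy hxy => key x hx y hy hgx hgy hxy⟩
  rcases Finset.eq_empty_or_nonempty (σ.support.filter (fun x => γ x = x)) with
    h | ⟨x, hxf⟩
  · left; rw [h]; simp
  · right
    rw [Finset.mem_filter] at hxf
    obtain ⟨hx, hgx⟩ := hxf
    set z := (σ ^ (n / 2)) x with hz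
    have hzx : z ≠ x := by
      intro h
      have : n ∣ n / 2 := hdvd x (Perm.mem_support.mp hx) _ (by rw [← hz, h])
      have := Nat.le_of_dvd (by omega) this
      omega
    have hzsupp : z ∈ σ.support := by
      rw [hz, Perm.pow_apply_mem_support]; exact hx
    have hgz : γ z = z := by
      rw [hz, hhalf, hgs, hgx, hinvpow]
    have hfilter : σ.support.filter (fun x => γ x = x) = {x, z} := by
      ext y
      rw [Finset.mem_filter, Finset.mem_insert, Finset.mem_singleton]
      constructor
      · rintro ⟨hy, hgy⟩
        by_cases hyx : y = x
        · exact Or.inl hyx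
        · exact Or.inr (key x hx y hy hgx hgy (fun h => hyx h.symm)).symm.symm
      · rintro (rfl | rfl)
        · exact ⟨hx, hgx⟩
        · exact ⟨hzsupp, hgz⟩
    rw [hfilter]
    exact Finset.card_pair (fun h => hzx h.symm)
end

section
/- Let σ be a permutation of a finite type that is a cycle of odd length n on its support, and let γ be an involution with γ ∘ σ ∘ γ = σ⁻¹ mapping the support of σ into itself. If x is the fixed point of γ in the support of σ, then σ^⌊n/2⌋ x is a fixed point of the involution γ ∘ σ, and it is the unique fixed point of γ ∘ σ in the support of σ. -/
open Equiv

theorem stmt_5 {α : Type*} [Fintype α] [DecidableEq α] (σ γ : Equiv.Perm α) (n : ℕ)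
    (hcyc : σ.IsCycle) (hcard : σ.support.card = n) (hodd : Odd n)
    (hinv : γ * γ = 1) (hconj : γ * σ * γ = σ⁻¹)
    (hsupp : ∀ x ∈ σ.support, γ x ∈ σ.support)
    (x : α) (hx : x ∈ σ.support) (hfix : γ x = x) :
    (γ * σ) ((σ ^ (n / 2)) x) = (σ ^ (n / 2)) x ∧
    ∀ y ∈ σ.support, (γ * σ) y = y → y = (σ ^ (n / 2)) x := by
  have hxne : σ x ≠ x := Perm.mem_support.mp hx
  have hγ : γ⁻¹ = γ := inv_eq_of_mul_eq_one_left hinv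
  have hord : orderOf σ = n := by rw [hcyc.orderOf, hcard]
  have hkey : ∀ k : ℕ, γ ((σ ^ k) x) = ((σ ^ k)⁻¹) x := by
    intro k
    have h1 : γ * σ ^ k * γ⁻¹ = σ⁻¹ ^ k := by
      rw [← conj_pow, hγ, hconj]
    have h2 := congrArg (fun f : Equiv.Perm α => f x) h1
    simp only [Perm.mul_apply, hγ, hfix, inv_pow] at h2
    exact h2
  obtain ⟨t, ht⟩ := hodd
  have hn2 : n / 2 = t := by omega
  have hσn : σ ^ n = 1 := by rw [← hord]; exact pow_orderOf_eq_one σ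
  -- the fixed point calculation
  have hfp : ∀ k : ℕ, ((γ * σ) ((σ ^ k) x) = (σ ^ k) x ↔ (σ ^ (2 * k + 1)) x = x) := by
    intro k
    have e1 : (γ * σ) ((σ ^ k) x) = ((σ ^ (k + 1))⁻¹) x := by
      rw [Perm.mul_apply, ← Perm.mul_apply σ (σ ^ k), ← pow_succ']
      exact hkey (k + 1)
    rw [e1, Perm.inv_eq_iff_eq]
    constructor
    · intro h
      have : (σ ^ (k + 1)) ((σ ^ k) x) = (σ ^ (2 * k + 1)) x := by
        rw [← Perm.mul_apply, ← pow_add]; ring_nf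
      rw [this] at h
      exact h.symm
    · intro h
      have : (σ ^ (k + 1)) ((σ ^ k) x) = (σ ^ (2 * k + 1)) x := by
        rw [← Perm.mul_apply, ← pow_add]; ring_nf
      rw [this, h]
  constructor
  · rw [hfp, hn2]
    have : 2 * t + 1 = n := by omega
    rw [this, hσn]; rfl
  · intro y hy hyfix
    obtain ⟨k, rfl⟩ := hcyc.exists_pow_eq hxne (Perm.mem_support.mp hy)
    rw [hfp] at hyfix
    have hdvd : n ∣ 2 * k + 1 := by
      rw [← hord]
      apply orderOf_dvd_of_pow_eq_one
      exact (hcyc.pow_eq_one_iff' hxne).mpr hyfix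
    have hmod : k ≡ t [MOD n] := by
      have h1 : 2 * k + 1 ≡ 2 * t + 1 [MOD n] := by
        have h2 : 2 * k + 1 ≡ 0 [MOD n] := (Nat.modEq_zero_iff_dvd).mpr hdvd
        have h3 : 2 * t + 1 ≡ 0 [MOD n] := by
          rw [show 2 * t + 1 = n by omega]
          exact (Nat.modEq_zero_iff_dvd).mpr dvd_rfl
        exact h2.trans h3.symm
      have h4 : 2 * k ≡ 2 * t [MOD n] := Nat.ModEq.add_right_cancel' 1 h1
      have hcop : Nat.gcd n 2 = 1 := by
        exact Nat.coprime_two_right.mpr ⟨t, ht⟩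
      exact h4.cancel_left_of_coprime hcop
    rw [hn2]
    have : σ ^ k = σ ^ t := by
      rw [pow_eq_pow_iff_modEq, hord]
      exact hmod
    rw [this]
end

section
/- Let σ be a permutation of a finite type that is a cycle of even length n on its support, and let γ be an involution with γ ∘ σ ∘ γ = σ⁻¹ mapping the support of σ into itself. If γ has exactly two fixed points in the support of σ, then γ ∘ σ has no fixed point in the support of σ. -/
open Equiv

theorem stmt_6 {α : Type*} [Fintype α] [DecidableEq α] (σ γ : Equiv.Perm α) (n : ℕ)
    (hcyc : σ.IsCycle) (hcard : σ.support.card = n) (heven : Even n)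
    (hinv : γ * γ = 1) (hconj : γ * σ * γ = σ⁻¹)
    (hsupp : ∀ x ∈ σ.support, γ x ∈ σ.support)
    (htwo : (σ.support.filter (fun x => γ x = x)).card = 2) :
    (σ.support.filter (fun x => (γ * σ) x = x)).card = 0 := by
  rw [Finset.card_eq_zero, Finset.filter_eq_empty_iff]
  intro x hx hfix
  simp only [Perm.mul_apply] at hfix
  have hγγ : ∀ z, γ (γ z) = z := fun z => by
    rw [← Perm.mul_apply, hinv, Perm.one_apply]
  have hγinv : γ⁻¹ = γ := inv_eq_of_mul_eq_one_right hinv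
  have hγx : γ x = σ x := by
    have h := congrArg γ hfix
    rw [hγγ] at h
    exact h.symm
  have key : ∀ i : ℤ, γ * σ ^ i * γ = σ ^ (-i) := by
    intro i
    have h : (γ * σ * γ⁻¹) ^ i = γ * σ ^ i * γ⁻¹ := conj_zpow
    rw [hγinv, hconj] at h
    rw [← h, inv_zpow, ← zpow_neg]
  have hxs : σ x ≠ x := Perm.mem_support.mp hx
  have hcycOn : σ.IsCycleOn (σ.cycleOf x).support := σ.isCycleOn_support_cycleOf x
  have hcEq : σ.cycleOf x = σ := hcyc.cycleOf_eq hxs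
  rw [hcEq] at hcycOn
  have hempty : σ.support.filter (fun z => γ z = z) = ∅ := by
    rw [Finset.filter_eq_empty_iff]
    intro y hy hγy
    have hys : σ y ≠ y := Perm.mem_support.mp hy
    obtain ⟨i, hi⟩ := hcyc.sameCycle hxs hys
    have h1 : γ y = (σ ^ (1 - i)) x := by
      have h := congrArg (fun p : Perm α => p (γ x)) (key i)
      simp only [Perm.mul_apply, hγγ] at h
      rw [hi] at h
      rw [h, hγx]
      have : σ x = (σ ^ (1 : ℤ)) x := by simp
      rw [this, ← Perm.mul_apply, ← zpow_add]
      have e : -i + 1 = 1 - i := by ring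
      rw [e]
    have h2 : (σ ^ (2 * i - 1)) x = x := by
      have h3 : (σ ^ (1 - i)) x = (σ ^ i) x := by rw [← h1, hγy, ← hi]
      have h4 := congrArg (fun z => (σ ^ (i - 1) : Perm α) z) h3
      simp only [← Perm.mul_apply, ← zpow_add] at h4
      have e1 : i - 1 + (1 - i) = 0 := by ring
      have e2 : i - 1 + i = 2 * i - 1 := by ring
      rw [e1, e2] at h4
      simpa using h4.symm
    have hdvd : ((σ.support.card : ℤ)) ∣ (2 * i - 1) := (hcycOn.zpow_apply_eq hx).mp h2
    rw [hcard] at hdvd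
    obtain ⟨m, hm⟩ := heven
    obtain ⟨k, hk⟩ := hdvd
    have h2d : (2 : ℤ) ∣ 2 * i - 1 := by
      rw [hk, hm]
      push_cast
      exact ⟨(m : ℤ) * k, by ring⟩
    obtain ⟨j, hj⟩ := h2d
    omega
  rw [hempty] at htwo
  simp at htwo
end

section
/- Let σ be a permutation of a finite type that is a cycle of even length n on its support, and let γ be an involution with γ ∘ σ ∘ γ = σ⁻¹ mapping the support of σ into itself. If γ has no fixed point in the support of σ, then γ ∘ σ has exactly two fixed points in the support of σ. -/
open Equiv

private lemma count_aux {α : Type*} [Fintype α] [DecidableEq α] (σ : Equiv.Perm α) (a : α)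
    (n : ℕ) [NeZero n]
    (hco : σ.IsCycleOn (σ.support : Set α)) (ha : a ∈ σ.support) (hcard : σ.support.card = n)
    (hsame : ∀ x ∈ σ.support, ∃ i : ℤ, (σ ^ i) a = x)
    (P : α → Prop) [DecidablePred P] (c : ZMod n)
    (hP : ∀ i : ℤ, P ((σ ^ i) a) ↔ 2 * (i : ZMod n) = c) :
    (σ.support.filter P).card = (Finset.univ.filter (fun k : ZMod n => 2 * k = c)).card := by
  have hmem : ∀ i : ℤ, (σ ^ i) a ∈ σ.support := fun i => Equiv.Perm.zpow_apply_mem_support.2 ha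
  have hcan : ∀ i j : ℤ, (σ ^ i) a = (σ ^ j) a ↔ ((i : ZMod n) = (j : ZMod n)) := by
    intro i j
    rw [hco.zpow_apply_eq_zpow_apply ha, hcard]
    exact (ZMod.intCast_eq_intCast_iff i j n).symm
  have hvk : ∀ k : ZMod n, (((k.val : ℤ) : ZMod n)) = k := by
    intro k
    push_cast
    simp [ZMod.natCast_val, ZMod.cast_id]
  symm
  refine Finset.card_bij (fun k _ => (σ ^ (k.val : ℤ)) a) ?_ ?_ ?_
  · intro k hk
    simp only [Finset.mem_filter, Finset.mem_univ, true_and] at hk ⊢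
    refine ⟨hmem _, (hP _).2 ?_⟩
    rw [hvk]; exact hk
  · intro k₁ _ k₂ _ h
    rw [hcan, hvk, hvk] at h
    exact h
  · intro x hx
    simp only [Finset.mem_filter, Finset.mem_univ, true_and] at hx
    obtain ⟨i, hi⟩ := hsame x hx.1
    refine ⟨(i : ZMod n), ?_, ?_⟩
    · simp only [Finset.mem_filter, Finset.mem_univ, true_and]
      exact (hP i).1 (hi ▸ hx.2)
    · show (σ ^ ((((i : ZMod n)).val : ℤ))) a = x
      rw [← hi, hcan, hvk]

theorem stmt_7 {α : Type*} [Fintype α] [DecidableEq α] (σ γ : Equiv.Perm α) (n : ℕ)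
    (hcyc : σ.IsCycle) (hcard : σ.support.card = n) (heven : Even n)
    (hinv : γ * γ = 1) (hconj : γ * σ * γ = σ⁻¹)
    (hsupp : ∀ x ∈ σ.support, γ x ∈ σ.support)
    (hzero : (σ.support.filter (fun x => γ x = x)).card = 0) :
    (σ.support.filter (fun x => (γ * σ) x = x)).card = 2 := by
  classical
  have hn2 : 2 ≤ n := hcard ▸ hcyc.two_le_card_support
  haveI : NeZero n := ⟨by omega⟩
  have hco : σ.IsCycleOn (σ.support : Set α) := by
    rw [Equiv.Perm.coe_support_eq_set_support]; exact hcyc.isCycleOn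
  obtain ⟨a, haa, hsc⟩ := id hcyc
  have ha : a ∈ σ.support := Equiv.Perm.mem_support.2 haa
  have hsame : ∀ x ∈ σ.support, ∃ i : ℤ, (σ ^ i) a = x := fun x hx =>
    hsc (Equiv.Perm.mem_support.1 hx)
  obtain ⟨m, hm⟩ := hsame (γ a) (hsupp a ha)
  have hγ2 : γ⁻¹ = γ := inv_eq_of_mul_eq_one_right hinv
  have hcpow : ∀ i : ℤ, γ * σ ^ i = σ ^ (-i) * γ := by
    intro i
    have h1 : (MulAut.conj γ) σ = σ⁻¹ := by
      simp only [MulAut.conj_apply, hγ2]; exact hconj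
    have h2 : (MulAut.conj γ) (σ ^ i) = σ ^ (-i) := by
      rw [map_zpow, h1, inv_zpow, zpow_neg]
    rw [MulAut.conj_apply, hγ2] at h2
    calc γ * σ ^ i = (γ * σ ^ i * γ) * γ := by rw [mul_assoc, hinv, mul_one]
      _ = σ ^ (-i) * γ := by rw [h2]
  have hkey : ∀ i : ℤ, γ ((σ ^ i) a) = (σ ^ (m - i)) a := by
    intro i
    have : γ ((σ ^ i) a) = (γ * σ ^ i) a := rfl
    rw [this, hcpow, Equiv.Perm.mul_apply, ← hm, ← Equiv.Perm.mul_apply, ← zpow_add]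
    congr 1
    ring
  have hcan : ∀ i j : ℤ, (σ ^ i) a = (σ ^ j) a ↔ ((i : ZMod n) = (j : ZMod n)) := by
    intro i j
    rw [hco.zpow_apply_eq_zpow_apply ha, hcard]
    exact (ZMod.intCast_eq_intCast_iff i j n).symm
  set M : ZMod n := ((m : ℤ) : ZMod n) with hMdef
  -- no solutions to 2k = M
  have hnosol : ∀ k : ZMod n, 2 * k ≠ M := by
    have h0 : (σ.support.filter (fun x => γ x = x)).card =
        (Finset.univ.filter (fun k : ZMod n => 2 * k = M)).card := by
      refine count_aux σ a n hco ha hcard hsame _ M ?_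
      intro i
      rw [hkey i, hcan]
      push_cast
      constructor
      · intro h; linear_combination -h
      · intro h; linear_combination -h
    rw [hzero] at h0
    intro k hk
    have : k ∈ Finset.univ.filter (fun k : ZMod n => 2 * k = M) := by
      simp [hk]
    have := Finset.card_pos.2 ⟨k, this⟩
    omega
  -- get k0 with 2 * k0 = M - 1
  have hMval : ((M.val : ℕ) : ZMod n) = M := by simp [ZMod.natCast_val, ZMod.cast_id]
  have hparity : M.val % 2 = 1 := by
    rcases Nat.mod_two_eq_zero_or_one M.val with h | h
    · exfalso
      apply hnosol ((M.val / 2 : ℕ) : ZMod n)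
      have h2 : (2 : ZMod n) * ((M.val / 2 : ℕ) : ZMod n) = ((2 * (M.val / 2) : ℕ) : ZMod n) := by
        push_cast; ring
      have h3 : 2 * (M.val / 2) = M.val := by omega
      rw [h2, h3, hMval]
    · exact h
  set k0 : ZMod n := ((M.val / 2 : ℕ) : ZMod n) with hk0def
  have hk0 : 2 * k0 = M - 1 := by
    have hv : M.val = 2 * (M.val / 2) + 1 := by omega
    have : M = 2 * k0 + 1 := by
      rw [← hMval, hv]
      push_cast
      ring
    rw [this]; ring
  -- half element
  obtain ⟨t, ht⟩ := heven
  have hhalfval : 2 * (n / 2) = n := by omega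
  have hhalf : (2 : ZMod n) * ((n / 2 : ℕ) : ZMod n) = 0 := by
    have : (((2 * (n / 2)) : ℕ) : ZMod n) = 0 := by rw [hhalfval]; exact ZMod.natCast_self n
    push_cast at this
    exact this
  have hne : ((n / 2 : ℕ) : ZMod n) ≠ 0 := by
    intro hdvd0
    rw [ZMod.natCast_eq_zero_iff] at hdvd0
    have := Nat.le_of_dvd (by omega) hdvd0
    omega
  have hL : ∀ x : ZMod n, 2 * x = 0 → x = 0 ∨ x = ((n / 2 : ℕ) : ZMod n) := by
    intro x hx
    have hvlt : x.val < n := ZMod.val_lt x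
    have hx' : ((2 * x.val : ℕ) : ZMod n) = 0 := by
      push_cast
      rw [ZMod.natCast_val, ZMod.cast_id]
      exact hx
    rw [ZMod.natCast_eq_zero_iff] at hx'
    obtain ⟨c, hc⟩ := hx'
    have h2 : 2 * x.val = 0 ∨ 2 * x.val = n := by
      match c with
      | 0 => left; omega
      | 1 => right; omega
      | (c + 2) =>
        exfalso
        have : n * 2 ≤ n * (c + 2) := Nat.mul_le_mul_left n (by omega)
        omega
    rcases h2 with h | h
    · left
      have hv0 : x.val = 0 := by omega
      calc x = ((x.val : ℕ) : ZMod n) := by simp [ZMod.natCast_val, ZMod.cast_id]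
        _ = 0 := by rw [hv0]; simp
    · right
      have hv0 : x.val = n / 2 := by omega
      calc x = ((x.val : ℕ) : ZMod n) := by simp [ZMod.natCast_val, ZMod.cast_id]
        _ = ((n / 2 : ℕ) : ZMod n) := by rw [hv0]
  -- main count
  have hmain : (σ.support.filter (fun x => (γ * σ) x = x)).card =
      (Finset.univ.filter (fun k : ZMod n => 2 * k = M - 1)).card := by
    refine count_aux σ a n hco ha hcard hsame _ (M - 1) ?_
    intro i
    have happ : (γ * σ) ((σ ^ i) a) = (σ ^ (m - (1 + i))) a := by
      have h1 : (γ * σ) ((σ ^ i) a) = γ ((σ ^ (1 + i)) a) := by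
        rw [zpow_add, zpow_one, Equiv.Perm.mul_apply, Equiv.Perm.mul_apply]
      rw [h1, hkey]
    rw [happ, hcan]
    push_cast
    constructor
    · intro h; linear_combination -h
    · intro h; linear_combination -h
  have hset : Finset.univ.filter (fun k : ZMod n => 2 * k = M - 1) =
      {k0, k0 + ((n / 2 : ℕ) : ZMod n)} := by
    ext k
    simp only [Finset.mem_filter, Finset.mem_univ, true_and, Finset.mem_insert,
      Finset.mem_singleton]
    constructor
    · intro h
      have h2 : 2 * (k - k0) = 0 := by linear_combination h - hk0
      rcases hL _ h2 with h' | h'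
      · left; exact sub_eq_zero.1 h'
      · right
        rw [sub_eq_iff_eq_add] at h'
        rw [h', add_comm]
    · rintro (rfl | rfl)
      · exact hk0
      · rw [mul_add, hk0, hhalf, add_zero]
  rw [hmain, hset]
  rw [Finset.card_insert_of_notMem, Finset.card_singleton]
  simp only [Finset.mem_singleton]
  intro h
  apply hne
  have h2 := h.symm
  rwa [add_eq_left] at h2
end

section
/- Among the tuples (γ, τ₁, τ₂, σ₂) in S₄ with σ₁ := (2 3 4) fixed (the 3-cycle sending 2↦3↦4↦2 and fixing 1) and satisfying σ₂ ∘ τ₂ ∘ τ₁ ∘ σ₁ = id, σ₂ of cycle type (2,2), τ₁, τ₂ transpositions, ⟨σ₁,σ₂,τ₁,τ₂⟩ transitive on {1,2,3,4}, γ² = id, γσ₁γ = σ₁⁻¹, γ(τ₁σ₁)γ = (τ₁σ₁)⁻¹, γ(τ₂τ₁σ₁)γ = (τ₂τ₁σ₁)⁻¹, there are exactly 3 tuples; and exactly 1 of them additionally satisfies the monotonicity condition b₁ ≤ b₂, where τᵢ = (aᵢ,bᵢ) with aᵢ < bᵢ. -/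
open Equiv

/-- The 3-cycle (2 3 4) of {1,2,3,4}, i.e. (on `Fin 4`, 0-indexed) 1 ↦ 2 ↦ 3 ↦ 1, fixing 0. -/
def sigma234 : Equiv.Perm (Fin 4) := Equiv.swap 1 3 * Equiv.swap 1 2

/-- The three solutions. -/
def tupA : Perm (Fin 4) × Perm (Fin 4) × Perm (Fin 4) × Perm (Fin 4) :=
  (Equiv.swap 2 3, Equiv.swap 1 2, Equiv.swap 0 1, Equiv.swap 0 1 * Equiv.swap 2 3)
def tupB : Perm (Fin 4) × Perm (Fin 4) × Perm (Fin 4) × Perm (Fin 4) :=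
  (Equiv.swap 1 2, Equiv.swap 1 3, Equiv.swap 0 3, Equiv.swap 0 3 * Equiv.swap 1 2)
def tupC : Perm (Fin 4) × Perm (Fin 4) × Perm (Fin 4) × Perm (Fin 4) :=
  (Equiv.swap 1 3, Equiv.swap 2 3, Equiv.swap 0 2, Equiv.swap 0 2 * Equiv.swap 1 3)

lemma swap_class : ∀ τ : Perm (Fin 4), (∃ a b : Fin 4, a ≠ b ∧ τ = Equiv.swap a b) →
    (τ = Equiv.swap 0 1 ∨ τ = Equiv.swap 0 2 ∨ τ = Equiv.swap 0 3 ∨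
     τ = Equiv.swap 1 2 ∨ τ = Equiv.swap 1 3 ∨ τ = Equiv.swap 2 3) := by decide

def KB (γ τ₁ τ₂ : Perm (Fin 4)) : Prop :=
    (γ * γ = 1 ∧ γ * sigma234 * γ = sigma234⁻¹ ∧
    (τ₁ = Equiv.swap 0 1 ∨ τ₁ = Equiv.swap 0 2 ∨ τ₁ = Equiv.swap 0 3 ∨
     τ₁ = Equiv.swap 1 2 ∨ τ₁ = Equiv.swap 1 3 ∨ τ₁ = Equiv.swap 2 3) ∧
    (τ₂ = Equiv.swap 0 1 ∨ τ₂ = Equiv.swap 0 2 ∨ τ₂ = Equiv.swap 0 3 ∨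
     τ₂ = Equiv.swap 1 2 ∨ τ₂ = Equiv.swap 1 3 ∨ τ₂ = Equiv.swap 2 3) ∧
    γ * (τ₁ * sigma234) * γ = (τ₁ * sigma234)⁻¹ ∧
    γ * (τ₂ * τ₁ * sigma234) * γ = (τ₂ * τ₁ * sigma234)⁻¹ ∧
    ((τ₂ * τ₁ * sigma234)⁻¹).cycleType = {2, 2}) →
    ((γ = Equiv.swap 2 3 ∧ τ₁ = Equiv.swap 1 2 ∧ τ₂ = Equiv.swap 0 1) ∨
     (γ = Equiv.swap 1 2 ∧ τ₁ = Equiv.swap 1 3 ∧ τ₂ = Equiv.swap 0 3) ∨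
     (γ = Equiv.swap 1 3 ∧ τ₁ = Equiv.swap 2 3 ∧ τ₂ = Equiv.swap 0 2))

instance KB.dec : ∀ γ τ₁ τ₂, Decidable (KB γ τ₁ τ₂) := fun γ τ₁ τ₂ => by
  unfold KB; infer_instance

set_option maxHeartbeats 4000000 in
set_option maxRecDepth 100000 in
lemma keyDec : ∀ γ τ₁ τ₂ : Perm (Fin 4), KB γ τ₁ τ₂ := by decide

lemma transitive_of (σ₂ τ₁ τ₂ : Perm (Fin 4)) (h : ∀ x, σ₂ x ≠ x) :
    ∀ x y : Fin 4, ∃ g ∈ Subgroup.closure {sigma234, σ₂, τ₁, τ₂}, g x = y := by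
  set H := Subgroup.closure ({sigma234, σ₂, τ₁, τ₂} : Set (Perm (Fin 4))) with hH
  have hσ₁ : sigma234 ∈ H := Subgroup.subset_closure (by simp)
  have hσ₂ : σ₂ ∈ H := Subgroup.subset_closure (by simp)
  have reach : ∀ x : Fin 4, ∃ g ∈ H, g 0 = x := by
    intro x
    have h0 : σ₂ 0 = 1 ∨ σ₂ 0 = 2 ∨ σ₂ 0 = 3 := by
      have h0' := h 0
      revert h0'; generalize σ₂ 0 = v; revert v; decide
    fin_cases x <;> rcases h0 with h0|h0|h0 <;>
      first
        | exact ⟨1, one_mem _, rfl⟩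
        | exact ⟨σ₂, hσ₂, h0⟩
        | (refine ⟨sigma234 * σ₂, H.mul_mem hσ₁ hσ₂, ?_⟩
           simp only [Equiv.Perm.mul_apply, h0]; decide)
        | (refine ⟨sigma234 * (sigma234 * σ₂), H.mul_mem hσ₁ (H.mul_mem hσ₁ hσ₂), ?_⟩
           simp only [Equiv.Perm.mul_apply, h0]; decide)
  intro x y
  obtain ⟨gx, hgx, hgx0⟩ := reach x
  obtain ⟨gy, hgy, hgy0⟩ := reach y
  refine ⟨gy * gx⁻¹, H.mul_mem hgy (H.inv_mem hgx), ?_⟩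
  rw [Equiv.Perm.mul_apply, ← hgx0, Equiv.Perm.coe_inv, Equiv.symm_apply_apply, hgy0]

lemma keyP (γ τ₁ τ₂ σ₂ : Perm (Fin 4)) :
    (σ₂ * τ₂ * τ₁ * sigma234 = 1 ∧
     σ₂.cycleType = {2, 2} ∧
     τ₁.IsSwap ∧ τ₂.IsSwap ∧
     (∀ x y : Fin 4, ∃ g ∈ Subgroup.closure {sigma234, σ₂, τ₁, τ₂}, g x = y) ∧
     γ * γ = 1 ∧ γ * sigma234 * γ = sigma234⁻¹ ∧
     γ * (τ₁ * sigma234) * γ = (τ₁ * sigma234)⁻¹ ∧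
     γ * (τ₂ * τ₁ * sigma234) * γ = (τ₂ * τ₁ * sigma234)⁻¹)
    ↔ ((γ, τ₁, τ₂, σ₂) = tupA ∨ (γ, τ₁, τ₂, σ₂) = tupB ∨ (γ, τ₁, τ₂, σ₂) = tupC) := by
  constructor
  · rintro ⟨h1, hct, hs1, hs2, -, hg1, hg2, hc1, hc2⟩
    have hσ : σ₂ = (τ₂ * τ₁ * sigma234)⁻¹ := by
      have h : σ₂ * (τ₂ * τ₁ * sigma234) = 1 := by rw [← h1]; group
      exact eq_inv_of_mul_eq_one_left h
    subst hσ
    rcases keyDec γ τ₁ τ₂ ⟨hg1, hg2, swap_class τ₁ hs1, swap_class τ₂ hs2, hc1, hc2, hct⟩ with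
      ⟨e1, e2, e3⟩ | ⟨e1, e2, e3⟩ | ⟨e1, e2, e3⟩ <;> subst e1 <;> subst e2 <;> subst e3
    · left; decide
    · right; left; decide
    · right; right; decide
  · rintro (h | h | h) <;>
      (obtain ⟨h1, h2, h3, h4⟩ : _ ∧ _ ∧ _ ∧ _ := by
        simpa [Prod.ext_iff] using h) <;> subst h1 <;> subst h2 <;> subst h3 <;> subst h4
    · exact ⟨by decide, by decide, ⟨1, 2, by decide, rfl⟩, ⟨0, 1, by decide, rfl⟩,
        transitive_of _ _ _ (by decide), by decide, by decide, by decide, by decide⟩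
    · exact ⟨by decide, by decide, ⟨1, 3, by decide, rfl⟩, ⟨0, 3, by decide, rfl⟩,
        transitive_of _ _ _ (by decide), by decide, by decide, by decide, by decide⟩
    · exact ⟨by decide, by decide, ⟨2, 3, by decide, rfl⟩, ⟨0, 2, by decide, rfl⟩,
        transitive_of _ _ _ (by decide), by decide, by decide, by decide, by decide⟩

theorem stmt_13 :
    Nat.card {p : Equiv.Perm (Fin 4) × Equiv.Perm (Fin 4) × Equiv.Perm (Fin 4) ×
        Equiv.Perm (Fin 4) //
      let γ := p.1; let τ₁ := p.2.1; let τ₂ := p.2.2.1; let σ₂ := p.2.2.2;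
      σ₂ * τ₂ * τ₁ * sigma234 = 1 ∧
      σ₂.cycleType = {2, 2} ∧
      τ₁.IsSwap ∧ τ₂.IsSwap ∧
      (∀ x y : Fin 4, ∃ g ∈ Subgroup.closure {sigma234, σ₂, τ₁, τ₂}, g x = y) ∧
      γ * γ = 1 ∧ γ * sigma234 * γ = sigma234⁻¹ ∧
      γ * (τ₁ * sigma234) * γ = (τ₁ * sigma234)⁻¹ ∧
      γ * (τ₂ * τ₁ * sigma234) * γ = (τ₂ * τ₁ * sigma234)⁻¹} = 3 ∧
    Nat.card {p : Equiv.Perm (Fin 4) × Equiv.Perm (Fin 4) × Equiv.Perm (Fin 4) ×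
        Equiv.Perm (Fin 4) //
      let γ := p.1; let τ₁ := p.2.1; let τ₂ := p.2.2.1; let σ₂ := p.2.2.2;
      σ₂ * τ₂ * τ₁ * sigma234 = 1 ∧
      σ₂.cycleType = {2, 2} ∧
      τ₁.IsSwap ∧ τ₂.IsSwap ∧
      (∀ x y : Fin 4, ∃ g ∈ Subgroup.closure {sigma234, σ₂, τ₁, τ₂}, g x = y) ∧
      γ * γ = 1 ∧ γ * sigma234 * γ = sigma234⁻¹ ∧
      γ * (τ₁ * sigma234) * γ = (τ₁ * sigma234)⁻¹ ∧
      γ * (τ₂ * τ₁ * sigma234) * γ = (τ₂ * τ₁ * sigma234)⁻¹ ∧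
      (∃ a₁ b₁ a₂ b₂ : Fin 4, a₁ < b₁ ∧ a₂ < b₂ ∧
        τ₁ = Equiv.swap a₁ b₁ ∧ τ₂ = Equiv.swap a₂ b₂ ∧ b₁ ≤ b₂)} = 1 := by
  constructor
  · have e : {p : Perm (Fin 4) × Perm (Fin 4) × Perm (Fin 4) × Perm (Fin 4) //
        let γ := p.1; let τ₁ := p.2.1; let τ₂ := p.2.2.1; let σ₂ := p.2.2.2;
        σ₂ * τ₂ * τ₁ * sigma234 = 1 ∧
        σ₂.cycleType = {2, 2} ∧
        τ₁.IsSwap ∧ τ₂.IsSwap ∧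
        (∀ x y : Fin 4, ∃ g ∈ Subgroup.closure {sigma234, σ₂, τ₁, τ₂}, g x = y) ∧
        γ * γ = 1 ∧ γ * sigma234 * γ = sigma234⁻¹ ∧
        γ * (τ₁ * sigma234) * γ = (τ₁ * sigma234)⁻¹ ∧
        γ * (τ₂ * τ₁ * sigma234) * γ = (τ₂ * τ₁ * sigma234)⁻¹} ≃
        ({tupA, tupB, tupC} : Set (Perm (Fin 4) × Perm (Fin 4) × Perm (Fin 4) × Perm (Fin 4))) :=
      Equiv.subtypeEquivRight fun p => by
        have h := keyP p.1 p.2.1 p.2.2.1 p.2.2.2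
        simp only [Set.mem_insert_iff, Set.mem_singleton_iff]
        exact h
    rw [Nat.card_congr e, Nat.card_coe_set_eq]
    exact Set.ncard_eq_three.mpr ⟨tupA, tupB, tupC, by decide, by decide, by decide, rfl⟩
  · have e : {p : Perm (Fin 4) × Perm (Fin 4) × Perm (Fin 4) × Perm (Fin 4) //
        let γ := p.1; let τ₁ := p.2.1; let τ₂ := p.2.2.1; let σ₂ := p.2.2.2;
        σ₂ * τ₂ * τ₁ * sigma234 = 1 ∧
        σ₂.cycleType = {2, 2} ∧
        τ₁.IsSwap ∧ τ₂.IsSwap ∧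
        (∀ x y : Fin 4, ∃ g ∈ Subgroup.closure {sigma234, σ₂, τ₁, τ₂}, g x = y) ∧
        γ * γ = 1 ∧ γ * sigma234 * γ = sigma234⁻¹ ∧
        γ * (τ₁ * sigma234) * γ = (τ₁ * sigma234)⁻¹ ∧
        γ * (τ₂ * τ₁ * sigma234) * γ = (τ₂ * τ₁ * sigma234)⁻¹ ∧
        (∃ a₁ b₁ a₂ b₂ : Fin 4, a₁ < b₁ ∧ a₂ < b₂ ∧
          τ₁ = Equiv.swap a₁ b₁ ∧ τ₂ = Equiv.swap a₂ b₂ ∧ b₁ ≤ b₂)} ≃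
        ({tupB} : Set (Perm (Fin 4) × Perm (Fin 4) × Perm (Fin 4) × Perm (Fin 4))) :=
      Equiv.subtypeEquivRight fun p => by
        simp only [Set.mem_singleton_iff]
        constructor
        · rintro ⟨h1, h2, h3, h4, h5, h6, h7, h8, h9, hm⟩
          rcases (keyP p.1 p.2.1 p.2.2.1 p.2.2.2).mp ⟨h1, h2, h3, h4, h5, h6, h7, h8, h9⟩ with
            hA | hB | hC
          · exfalso
            have h21 : p.2.1 = Equiv.swap 1 2 := congrArg (fun q => q.2.1) hA
            have h221 : p.2.2.1 = Equiv.swap 0 1 := congrArg (fun q => q.2.2.1) hA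
            rw [h21, h221] at hm
            revert hm; decide
          · exact hB
          · exfalso
            have h21 : p.2.1 = Equiv.swap 2 3 := congrArg (fun q => q.2.1) hC
            have h221 : p.2.2.1 = Equiv.swap 0 2 := congrArg (fun q => q.2.2.1) hC
            rw [h21, h221] at hm
            revert hm; decide
        · intro h
          obtain ⟨h1, h2, h3, h4, h5, h6, h7, h8, h9⟩ :=
            (keyP p.1 p.2.1 p.2.2.1 p.2.2.2).mpr (Or.inr (Or.inl h))
          refine ⟨h1, h2, h3, h4, h5, h6, h7, h8, h9, ?_⟩
          have h21 : p.2.1 = Equiv.swap 1 3 := congrArg (fun q => q.2.1) h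
          have h221 : p.2.2.1 = Equiv.swap 0 3 := congrArg (fun q => q.2.2.1) h
          rw [h21, h221]
          exact ⟨1, 3, 0, 3, by decide, by decide, rfl, rfl, by decide⟩
    rw [Nat.card_congr e, Nat.card_coe_set_eq, Set.ncard_singleton]
end

section
/- Let τ₁, …, τᵣ be transpositions in S_d with τᵢ = (aᵢ, bᵢ), aᵢ < bᵢ, satisfying: whenever i ≥ 2 and bᵢ ≠ b_{i−1}, the integer bᵢ does not occur among a₁, b₁, …, a_{i−1}, b_{i−1}; and assume the number of distinct values among b₁, …, bᵣ is strictly less than d. Then there exists a permutation π ∈ S_d such that the conjugated transpositions π τᵢ π⁻¹ = (aᵢ′, bᵢ′), with aᵢ′ < bᵢ′, satisfy the monotonicity condition b₁′ ≤ b₂′ ≤ ⋯ ≤ bᵣ′. -/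
open Equiv

namespace Stmt15Aux

variable {d r : ℕ}

/-- `P b x n` : the value `x` occurs as `b` at index `n`. -/
def P (b : Fin r → Fin d) (x : Fin d) (n : ℕ) : Prop := ∃ h : n < r, b ⟨n, h⟩ = x

instance (b : Fin r → Fin d) (x : Fin d) : DecidablePred (P b x) := fun _ =>
  exists_prop_decidable _

theorem exP (b : Fin r → Fin d) (x : Fin d) (hx : ∃ i : Fin r, b i = x) :
    ∃ n, P b x n := by
  obtain ⟨i, hi⟩ := hx
  exact ⟨i.1, i.2, hi⟩

/-- index of first occurrence of the value `b i`. -/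
noncomputable def g (b : Fin r → Fin d) (i : Fin r) : ℕ :=
  Nat.find (⟨i.1, i.2, rfl⟩ : ∃ n, P b (b i) n)

theorem g_spec (b : Fin r → Fin d) (i : Fin r) :
    ∃ h : g b i < r, b ⟨g b i, h⟩ = b i :=
  Nat.find_spec (⟨i.1, i.2, rfl⟩ : ∃ n, P b (b i) n)

theorem g_le (b : Fin r → Fin d) (i : Fin r) : g b i ≤ i.1 :=
  Nat.find_le ⟨i.2, rfl⟩

theorem g_le_g (b : Fin r → Fin d) {i j : Fin r} (h : b i = b j) : g b i ≤ g b j := by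
  obtain ⟨hr, hb⟩ := g_spec b j
  exact Nat.find_le ⟨hr, hb.trans h.symm⟩

theorem g_congr (b : Fin r → Fin d) {i j : Fin r} (h : b i = b j) : g b i = g b j :=
  le_antisymm (g_le_g b h) (g_le_g b h.symm)

/-- the key: image values of `b` get `d + first occurrence`, others their own value. -/
noncomputable def key (b : Fin r → Fin d) (x : Fin d) : ℕ :=
  if hx : ∃ i : Fin r, b i = x then d + Nat.find (exP b x hx) else x.1

theorem key_b (b : Fin r → Fin d) (i : Fin r) : key b (b i) = d + g b i := by
  rw [key, dif_pos (⟨i, rfl⟩ : ∃ j : Fin r, b j = b i)]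
  rfl

theorem key_inj (b : Fin r → Fin d) : Function.Injective (key b) := by
  intro x y hxy
  rw [key, key] at hxy
  split_ifs at hxy with hx hy hy
  · have h1 := Nat.find_spec (exP b x hx)
    have h2 := Nat.find_spec (exP b y hy)
    have heq : Nat.find (exP b x hx) = Nat.find (exP b y hy) := by omega
    obtain ⟨hr1, hb1⟩ := h1
    obtain ⟨hr2, hb2⟩ := h2
    rw [← hb1, ← hb2]
    congr 1
    exact Fin.ext heq
  · exact absurd hxy (by have := y.2; omega)
  · exact absurd hxy (by have := x.2; omega)
  · exact Fin.ext hxy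

section WithFresh

variable (a b : Fin r → Fin d)
variable (hfresh : ∀ i j : Fin r, (i : ℕ) + 1 = (j : ℕ) → b j ≠ b i →
      ∀ k : Fin r, k < j → b j ≠ a k ∧ b j ≠ b k)

include hfresh

theorem g_step (m : ℕ) (hm : m + 1 < r) :
    g b ⟨m, Nat.lt_of_succ_lt hm⟩ ≤ g b ⟨m + 1, hm⟩ := by
  by_cases hbb : b ⟨m + 1, hm⟩ = b ⟨m, Nat.lt_of_succ_lt hm⟩
  · exact le_of_eq (g_congr b hbb.symm)
  · have hfr := hfresh ⟨m, Nat.lt_of_succ_lt hm⟩ ⟨m + 1, hm⟩ rfl hbb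
    have hgj : m + 1 ≤ g b ⟨m + 1, hm⟩ := by
      by_contra hlt
      push_neg at hlt
      obtain ⟨hr, hb⟩ := g_spec b ⟨m + 1, hm⟩
      have hk : (⟨g b ⟨m + 1, hm⟩, hr⟩ : Fin r) < ⟨m + 1, hm⟩ :=
        Fin.mk_lt_mk.mpr hlt
      exact (hfr _ hk).2 hb.symm
    have hgi : g b ⟨m, Nat.lt_of_succ_lt hm⟩ ≤ m := g_le b _
    omega

theorem g_mono : ∀ i j : Fin r, i ≤ j → g b i ≤ g b j := by
  suffices H : ∀ n (hn : n < r) (i : Fin r), i.1 ≤ n → g b i ≤ g b ⟨n, hn⟩ by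
    intro i j hij
    have := H j.1 j.2 i hij
    simpa using this
  intro n
  induction n with
  | zero =>
    intro hn i hi
    have : i = ⟨0, hn⟩ := Fin.ext (Nat.le_zero.mp hi)
    rw [this]
  | succ n ih =>
    intro hn i hi
    rcases Nat.lt_or_ge i.1 (n + 1) with h | h
    · have h' : i.1 ≤ n := by omega
      exact le_trans (ih (Nat.lt_of_succ_lt hn) i h') (g_step a b hfresh n hn)
    · have : i = ⟨n + 1, hn⟩ := Fin.ext (show i.1 = n + 1 by omega)
      rw [this]

theorem first_lt (hab : ∀ i, a i < b i) (i jf : Fin r)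
    (hbjf : b jf = a i) (hg : g b jf = jf.1) : jf.1 < g b i := by
  rcases lt_trichotomy jf.1 (g b i) with h | h | h
  · exact h
  · exfalso
    obtain ⟨hr1, hb1⟩ := g_spec b i
    have hbi : b jf = b i := by
      rw [← hb1]
      congr 1
      exact Fin.ext h
    rw [hbjf] at hbi
    exact ne_of_lt (hab i) hbi
  · exfalso
    rcases Nat.lt_or_ge i.1 jf.1 with hij | hij
    · have hpos : 0 < jf.1 := by omega
      have hpred : jf.1 - 1 < r := by have := jf.2; omega
      have hstep : ((⟨jf.1 - 1, hpred⟩ : Fin r) : ℕ) + 1 = (jf : ℕ) := by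
        simp only [Fin.val_mk]
        omega
      have hbne : b jf ≠ b ⟨jf.1 - 1, hpred⟩ := by
        intro hEq
        have h1 := g_congr b hEq
        have h2 := g_le b ⟨jf.1 - 1, hpred⟩
        simp only [Fin.val_mk] at h2
        omega
      have hfr := hfresh ⟨jf.1 - 1, hpred⟩ jf hstep hbne
      have hik : i < jf := Fin.lt_def.mpr hij
      exact (hfr i hik).1 hbjf
    · have hle : jf ≤ i := Fin.le_def.mpr hij
      have := g_mono a b hfresh jf i hle
      omega

theorem key_a_lt (hab : ∀ i, a i < b i) (i : Fin r) : key b (a i) < key b (b i) := by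
  rw [key_b]
  rw [key]
  split_ifs with hx
  · obtain ⟨hr0, hb0⟩ := Nat.find_spec (exP b (a i) hx)
    have hg : g b (⟨Nat.find (exP b (a i) hx), hr0⟩ : Fin r)
        = (⟨Nat.find (exP b (a i) hx), hr0⟩ : Fin r).1 := by
      refine le_antisymm (g_le b _) ?_
      obtain ⟨hr1, hb1⟩ := g_spec b (⟨Nat.find (exP b (a i) hx), hr0⟩ : Fin r)
      exact Nat.find_le ⟨hr1, hb1.trans hb0⟩
    have hmain := first_lt a b hfresh hab i ⟨Nat.find (exP b (a i) hx), hr0⟩ hb0 hg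
    simp only [Fin.val_mk] at hmain
    omega
  · have := (a i).2
    omega

end WithFresh

end Stmt15Aux

open Stmt15Aux in
theorem stmt_15 (d r : ℕ) (a b : Fin r → Fin d)
    (hab : ∀ i, a i < b i)
    (hfresh : ∀ i j : Fin r, (i : ℕ) + 1 = (j : ℕ) → b j ≠ b i →
      ∀ k : Fin r, k < j → b j ≠ a k ∧ b j ≠ b k)
    (hcard : (Finset.univ.image b).card < d) :
    ∃ π : Equiv.Perm (Fin d),
      Monotone (fun i : Fin r => max (π (a i)) (π (b i))) := by
  classical
  set S : Finset ℕ := Finset.univ.image (key b) with hS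
  have hScard : S.card = d := by
    rw [hS, Finset.card_image_of_injective _ (key_inj b), Finset.card_univ,
      Fintype.card_fin]
  let oi := S.orderIsoOfFin hScard
  have hmem : ∀ x : Fin d, key b x ∈ S := fun x =>
    Finset.mem_image_of_mem _ (Finset.mem_univ x)
  let f : Fin d → Fin d := fun x => oi.symm ⟨key b x, hmem x⟩
  have hf_le : ∀ x y : Fin d, key b x ≤ key b y → f x ≤ f y := by
    intro x y h
    exact oi.symm.le_iff_le.mpr (by exact_mod_cast h)
  have hf_lt : ∀ x y : Fin d, key b x < key b y → f x < f y := by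
    intro x y h
    exact oi.symm.lt_iff_lt.mpr (by exact_mod_cast h)
  have hf_inj : Function.Injective f := by
    intro x y hxy
    have : (⟨key b x, hmem x⟩ : S) = ⟨key b y, hmem y⟩ := oi.symm.injective hxy
    exact key_inj b (by simpa using Subtype.ext_iff.mp this)
  let π : Equiv.Perm (Fin d) := Equiv.ofBijective f (Finite.injective_iff_bijective.mp hf_inj)
  refine ⟨π, ?_⟩
  intro i j hij
  have hπ : ∀ x, π x = f x := fun x => rfl
  simp only [hπ]
  have hai : f (a i) < f (b i) := hf_lt _ _ (key_a_lt a b hfresh hab i)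
  have haj : f (a j) < f (b j) := hf_lt _ _ (key_a_lt a b hfresh hab j)
  rw [max_eq_right hai.le, max_eq_right haj.le]
  apply hf_le
  rw [key_b, key_b]
  have := g_mono a b hfresh i j hij
  omega
end
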